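/- arXiv:0905.2671 — 3 statements merged into one kernel-verified Lean document; each statement's English description precedes it below -/
import Mathlib

section
/- Let K be a strictly convex compact body in ℝ^d with nonempty interior. For p in K and a unit vector e, define a(p,e) = max {a ≥ 0 : p + a·e ∈ K}. Then the function (p,e) ↦ a(p,e) is continuous on K × S^{d-1}. -/
/-!
Write `a(p, e)` for the exit distance. Along a ray the admissible set `{a ≥ 0 | p + a • e ∈ K}` is
the compact interval `[0, a(p, e)]` by convexity. Upper semicontinuity: if `c > a(p, e)` then
`p + c • e` lies in the open set `Kᶜ`, hence so does `p' + c • e'` nearby, and convexity forces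
`a(p', e') < c`. Lower semicontinuity: if `0 < c < a(p, e)` then, by strict convexity, `p + c • e`
lies in the interior of `K`, hence so does `p' + c • e'` nearby, giving `c ≤ a(p', e')`.
-/

open Metric Set Filter Topology

section RayExit

variable {E : Type*} [AddCommGroup E] [Module ℝ E]

def raySet (K : Set E) (p e : E) : Set ℝ := {a | 0 ≤ a ∧ p + a • e ∈ K}

noncomputable def rayExit (K : Set E) (p e : E) : ℝ := sSup (raySet K p e)

theorem Convex.add_smul_mem_of_le {K : Set E} (hK : Convex ℝ K) {p e : E} {L t : ℝ}
    (hp : p ∈ K) (hL : p + L • e ∈ K) (ht₀ : 0 ≤ t) (htL : t ≤ L) : p + t • e ∈ K := by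
  rcases htL.eq_or_lt with rfl | htL
  · exact hL
  have hL₀ : 0 < L := ht₀.trans_lt htL
  have h := hK.add_smul_mem hp hL ⟨div_nonneg ht₀ hL₀.le, (div_le_one hL₀).2 htL.le⟩
  rwa [smul_smul, div_mul_cancel₀ _ hL₀.ne'] at h

variable [TopologicalSpace E]

theorem StrictConvex.add_smul_mem_interior_of_lt {K : Set E} (hK : StrictConvex ℝ K) {p e : E}
    {L t : ℝ} (hp : p ∈ K) (hL : p + L • e ∈ K) (he : e ≠ 0) (ht₀ : 0 < t) (htL : t < L) :
    p + t • e ∈ interior K := by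
  have hL₀ : 0 < L := ht₀.trans htL
  have h := hK.add_smul_mem hp hL (smul_ne_zero hL₀.ne' he) (div_pos ht₀ hL₀)
    ((div_lt_one hL₀).2 htL)
  rwa [smul_smul, div_mul_cancel₀ _ hL₀.ne'] at h

variable [IsTopologicalAddGroup E] [ContinuousSMul ℝ E] [T2Space E] {K : Set E}

theorem isCompact_raySet (hK : IsCompact K) (p : E) {e : E} (he : e ≠ 0) :
    IsCompact (raySet K p e) :=
  ((Homeomorph.addLeft p).isClosedEmbedding.comp
    (isClosedEmbedding_smul_left he)).isCompact_preimage hK |>.inter_left isClosed_Ici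

theorem rayExit_mem_raySet (hK : IsCompact K) {p e : E} (hp : p ∈ K) (he : e ≠ 0) :
    rayExit K p e ∈ raySet K p e :=
  (isCompact_raySet hK p he).sSup_mem ⟨0, le_rfl, by simpa using hp⟩

theorem le_rayExit (hK : IsCompact K) {p e : E} (he : e ≠ 0) {a : ℝ} (ha : a ∈ raySet K p e) :
    a ≤ rayExit K p e :=
  le_csSup (isCompact_raySet hK p he).bddAbove ha

theorem upperSemicontinuousOn_rayExit (hK : IsCompact K) (hKconv : Convex ℝ K) :
    UpperSemicontinuousOn (fun pe : E × E => rayExit K pe.1 pe.2) (K ×ˢ {0}ᶜ) := by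
  rintro ⟨p, e⟩ ⟨hp, he⟩ c hc
  have hc₀ : 0 < c := (rayExit_mem_raySet hK hp he).1.trans_lt hc
  have hout : p + c • e ∈ Kᶜ := fun h => hc.not_ge (le_rayExit hK he ⟨hc₀.le, h⟩)
  have hnear : ∀ᶠ pe' : E × E in 𝓝 (p, e), pe'.1 + c • pe'.2 ∈ Kᶜ :=
    (continuous_fst.add (continuous_snd.const_smul c)).continuousAt.eventually_mem
      (hK.isClosed.isOpen_compl.mem_nhds hout)
  filter_upwards [nhdsWithin_le_nhds hnear, self_mem_nhdsWithin] with ⟨p', e'⟩ hout' ⟨hp', he'⟩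
  by_contra! hle
  exact hout' (hKconv.add_smul_mem_of_le hp' (rayExit_mem_raySet hK hp' he').2 hc₀.le hle)

theorem lowerSemicontinuousOn_rayExit (hK : IsCompact K) (hKconv : StrictConvex ℝ K) :
    LowerSemicontinuousOn (fun pe : E × E => rayExit K pe.1 pe.2) (K ×ˢ {0}ᶜ) := by
  rintro ⟨p, e⟩ ⟨hp, he⟩ c hc
  rcases lt_or_ge c 0 with hc₀ | hc₀
  · filter_upwards [self_mem_nhdsWithin] with ⟨p', e'⟩ ⟨hp', he'⟩
    exact hc₀.trans_le (rayExit_mem_raySet hK hp' he').1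
  obtain ⟨c', hcc', hc'⟩ := exists_between hc
  have hc'₀ : 0 < c' := hc₀.trans_lt hcc'
  have hin : p + c' • e ∈ interior K :=
    hKconv.add_smul_mem_interior_of_lt hp (rayExit_mem_raySet hK hp he).2 he hc'₀ hc'
  have hnear : ∀ᶠ pe' : E × E in 𝓝 (p, e), pe'.1 + c' • pe'.2 ∈ interior K :=
    (continuous_fst.add (continuous_snd.const_smul c')).continuousAt.eventually_mem
      (isOpen_interior.mem_nhds hin)
  filter_upwards [nhdsWithin_le_nhds hnear, self_mem_nhdsWithin] with ⟨p', e'⟩ hin' ⟨_, he'⟩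
  exact hcc'.trans_le (le_rayExit hK he' ⟨hc'₀.le, interior_subset hin'⟩)

theorem continuousOn_rayExit (hK : IsCompact K) (hKconv : StrictConvex ℝ K) :
    ContinuousOn (fun pe : E × E => rayExit K pe.1 pe.2) (K ×ˢ {0}ᶜ) :=
  continuousOn_iff_lower_upperSemicontinuousOn.2
    ⟨lowerSemicontinuousOn_rayExit hK hKconv, upperSemicontinuousOn_rayExit hK hKconv.convex⟩

end RayExit

theorem stmt1_general (d : ℕ) (K : Set (EuclideanSpace ℝ (Fin d)))
    (hKcomp : IsCompact K) (hKconv : StrictConvex ℝ K) :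
    ContinuousOn
      (fun pe : EuclideanSpace ℝ (Fin d) × EuclideanSpace ℝ (Fin d) =>
        sSup {a : ℝ | 0 ≤ a ∧ pe.1 + a • pe.2 ∈ K})
      (K ×ˢ sphere (0 : EuclideanSpace ℝ (Fin d)) 1) :=
  (continuousOn_rayExit hKcomp hKconv).mono <|
    prod_mono subset_rfl fun _ he => ne_zero_of_mem_unit_sphere ⟨_, he⟩

/-- For a strictly convex compact body `K ⊆ ℝ^d` with nonempty interior, the function
`(p, e) ↦ max {a ≥ 0 : p + a • e ∈ K}` is continuous on `K × S^{d-1}`. -/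
theorem stmt1 (d : ℕ) (K : Set (EuclideanSpace ℝ (Fin d)))
    (hKcomp : IsCompact K) (hKconv : StrictConvex ℝ K) (hKint : (interior K).Nonempty) :
    ContinuousOn
      (fun pe : EuclideanSpace ℝ (Fin d) × EuclideanSpace ℝ (Fin d) =>
        sSup {a : ℝ | 0 ≤ a ∧ pe.1 + a • pe.2 ∈ K})
      (K ×ˢ sphere (0 : EuclideanSpace ℝ (Fin d)) 1) :=
  stmt1_general d K hKcomp hKconv
end

section
/- Let K be a non-angular convex body in ℝ^d and let (p,r) ∈ ∂K × SO(d), where r determines an orthonormal frame (e_1,…,e_d). Define a_i = max{a ≥ 0 : p + a e_i ∈ K}, b_i = max{a ≥ 0 : p − a e_i ∈ K}, and set t_i = a_i − b_i, s_i = a_i + b_i. Then the vector (t_1,…,t_d, s_1 − s_2, s_2 − s_3, …, s_{d−1} − s_d) ∈ ℝ^{2d−1} is nonzero. -/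
/-!
Non-angularity at `p`, applied to the frame `e`, gives a line `p + ℝ • e i` meeting `int K` at
some `p + t • e i`, `t ≠ 0`. Since `p ∉ int K`, `p` cannot lie strictly between that interior
point and a point of `K`, so the ray from `p` away from it meets `K` only at `p`: one of `a i`,
`b i` is `0` while the other is at least `|t| > 0`, hence `a i - b i ≠ 0`.
-/

open Metric Set

section
variable {E : Type*} [AddCommGroup E] [Module ℝ E]

lemma mem_openSegment_add_smul_sub_smul (p u : E) {t s : ℝ} (ht : 0 < t) (hs : 0 < s) :
    p ∈ openSegment ℝ (p + t • u) (p - s • u) := by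
  refine mem_openSegment_iff_div.2 ⟨s, t, hs, ht, ?_⟩
  have hsum : s / (s + t) + t / (s + t) = 1 := by field_simp
  linear_combination (norm := module) hsum • p

variable [TopologicalSpace E] [IsTopologicalAddGroup E] [ContinuousSMul ℝ E] {K : Set E}

lemma Convex.sub_smul_notMem_of_add_smul_mem_interior (hK : Convex ℝ K) {p u : E}
    (hp : p ∉ interior K) {t s : ℝ} (ht : 0 < t) (hs : 0 < s) (hq : p + t • u ∈ interior K) :
    p - s • u ∉ K := fun hr =>
  hp <| hK.openSegment_interior_self_subset_interior hq hr <|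
    mem_openSegment_add_smul_sub_smul p u ht hs

lemma Convex.isGreatest_sub_smul_eq_zero (hK : Convex ℝ K) {p u : E} (hp : p ∉ interior K)
    {t b : ℝ} (ht : 0 < t) (hq : p + t • u ∈ interior K)
    (hb : IsGreatest {s : ℝ | 0 ≤ s ∧ p - s • u ∈ K} b) : b = 0 := by
  obtain ⟨⟨hb0, hbK⟩, -⟩ := hb
  by_contra hne
  exact hK.sub_smul_notMem_of_add_smul_mem_interior hp ht (hb0.lt_of_ne' hne) hq hbK

lemma Convex.isGreatest_add_smul_ne_isGreatest_sub_smul_of_pos (hK : Convex ℝ K) {p u : E}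
    (hp : p ∉ interior K) {t a b : ℝ} (ht : 0 < t) (hq : p + t • u ∈ interior K)
    (ha : IsGreatest {s : ℝ | 0 ≤ s ∧ p + s • u ∈ K} a)
    (hb : IsGreatest {s : ℝ | 0 ≤ s ∧ p - s • u ∈ K} b) : a ≠ b := by
  have hta : t ≤ a := ha.2 ⟨ht.le, interior_subset hq⟩
  rw [hK.isGreatest_sub_smul_eq_zero hp ht hq hb]
  exact (ht.trans_le hta).ne'

lemma Convex.isGreatest_add_smul_ne_isGreatest_sub_smul (hK : Convex ℝ K) {p u : E}
    (hp : p ∉ interior K) {t a b : ℝ} (ht : t ≠ 0) (hq : p + t • u ∈ interior K)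
    (ha : IsGreatest {s : ℝ | 0 ≤ s ∧ p + s • u ∈ K} a)
    (hb : IsGreatest {s : ℝ | 0 ≤ s ∧ p - s • u ∈ K} b) : a ≠ b := by
  rcases ht.lt_or_gt with ht | ht
  · refine (hK.isGreatest_add_smul_ne_isGreatest_sub_smul_of_pos (u := -u) hp (neg_pos.2 ht)
      (by rwa [neg_smul_neg]) ?_ ?_).symm
    · simpa only [smul_neg, ← sub_eq_add_neg] using hb
    · simpa only [smul_neg, sub_neg_eq_add] using ha
  · exact hK.isGreatest_add_smul_ne_isGreatest_sub_smul_of_pos hp ht hq ha hb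

end

theorem stmt3_general (d : ℕ) (K : Set (EuclideanSpace ℝ (Fin d)))
    (hKconv : Convex ℝ K)
    (hna : ∀ o ∈ frontier K, ∀ v : Fin d → EuclideanSpace ℝ (Fin d), Orthonormal ℝ v →
      ∃ (i : Fin d) (t : ℝ), o + t • v i ∈ interior K)
    (p : EuclideanSpace ℝ (Fin d)) (hp : p ∈ frontier K)
    (e : Fin d → EuclideanSpace ℝ (Fin d)) (he : Orthonormal ℝ e)
    (a b : Fin d → ℝ)
    (ha : ∀ i, IsGreatest {t : ℝ | 0 ≤ t ∧ p + t • e i ∈ K} (a i))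
    (hb : ∀ i, IsGreatest {t : ℝ | 0 ≤ t ∧ p - t • e i ∈ K} (b i)) :
    ¬ ((∀ i, a i - b i = 0) ∧ (∀ i j : Fin d, (a i + b i) - (a j + b j) = 0)) := by
  rintro ⟨hab, -⟩
  have hpK : p ∉ interior K := hp.2
  obtain ⟨i, t, hti⟩ := hna p hp e he
  have ht : t ≠ 0 := by
    rintro rfl
    exact hpK (by simpa using hti)
  exact hKconv.isGreatest_add_smul_ne_isGreatest_sub_smul hpK ht hti (ha i) (hb i)
    (sub_eq_zero.1 (hab i))

/-- Let `K ⊆ ℝ^d` be a non-angular convex body, `p ∈ ∂K`, and `(e_1, …, e_d)` an orthonormal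
frame. With `a i = max {a ≥ 0 : p + a • e i ∈ K}` and `b i = max {a ≥ 0 : p - a • e i ∈ K}`,
the vector `(a 1 - b 1, …, a d - b d, (a 1 + b 1) - (a 2 + b 2), …)` is nonzero; that is,
it is impossible that all `a i = b i` and all the sums `a i + b i` are equal. -/
theorem stmt3 (d : ℕ) (K : Set (EuclideanSpace ℝ (Fin d)))
    (hKconv : Convex ℝ K) (hKcomp : IsCompact K) (hKint : (interior K).Nonempty)
    (hna : ∀ o ∈ frontier K, ∀ v : Fin d → EuclideanSpace ℝ (Fin d), Orthonormal ℝ v →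
      ∃ (i : Fin d) (t : ℝ), o + t • v i ∈ interior K)
    (p : EuclideanSpace ℝ (Fin d)) (hp : p ∈ frontier K)
    (e : Fin d → EuclideanSpace ℝ (Fin d)) (he : Orthonormal ℝ e)
    (a b : Fin d → ℝ)
    (ha : ∀ i, IsGreatest {t : ℝ | 0 ≤ t ∧ p + t • e i ∈ K} (a i))
    (hb : ∀ i, IsGreatest {t : ℝ | 0 ≤ t ∧ p - t • e i ∈ K} (b i)) :
    ¬ ((∀ i, a i - b i = 0) ∧ (∀ i j : Fin d, (a i + b i) - (a j + b j) = 0)) :=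
  stmt3_general d K hKconv hna p hp e he a b ha hb
end

section
/- Let K and K_n be convex bodies in ℝ^d with K_n → K in the Hausdorff metric, and let l_n be lines converging to a line l such that l meets int K in an open segment σ. Then for large n, l_n meets int K_n in an open segment σ_n, and the midpoints of σ_n converge to the midpoint of σ, and the lengths of σ_n converge to the length of σ. -/
/-!
A closed convex set within Hausdorff distance `δ` of a ball of radius `ε` contains the concentric
ball of radius `ε - δ`: a point outside would be separated by a hyperplane, and moving `δ` away
from it along the normal stays in the big ball but gets farther than `δ` from the set. Hence each
parameter of the open chord of `l` in `int K` eventually gives a point of `l_n` in `int K_n`,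
while a point of `l` off `K` is at positive distance from `K`, so eventually off `K_n`. As the
chord parameter sets are intervals, this squeezes their endpoints onto those of `l ∩ K`, which
gives the convergence of midpoints and lengths.
-/

open Metric Set Filter Topology
open scoped RealInnerProductSpace

section OrderLimits

variable {α ι : Type*} [LinearOrder α] [TopologicalSpace α] [OrderTopology α] [DenselyOrdered α]
  {l : Filter ι} {S : ι → Set α} {xs : ι → α} {x y : α}

theorem tendsto_of_isLeast_of_ordConnected (hxy : x < y) (hS : ∀ i, (S i).OrdConnected)
    (hleast : ∀ᶠ i in l, IsLeast (S i) (xs i)) (hin : ∀ s ∈ Ioo x y, ∀ᶠ i in l, s ∈ S i)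
    (hout : ∀ a < x, ∀ᶠ i in l, a ∉ S i) : Tendsto xs l (𝓝 x) := by
  refine tendsto_order.2 ⟨fun a ha => ?_, fun b hb => ?_⟩
  · obtain ⟨s, hs⟩ := exists_between hxy
    filter_upwards [hleast, hin s hs, hout a ha] with i hl hsi hai
    by_contra! hle
    exact hai ((hS i).out hl.1 hsi ⟨hle, (ha.trans hs.1).le⟩)
  · obtain ⟨s, hxs, hs⟩ := exists_between (lt_min hb hxy)
    filter_upwards [hleast, hin s ⟨hxs, hs.trans_le (min_le_right _ _)⟩] with i hl hsi
    exact (hl.2 hsi).trans_lt (hs.trans_le (min_le_left _ _))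

theorem tendsto_of_isGreatest_of_ordConnected (hxy : x < y) (hS : ∀ i, (S i).OrdConnected)
    (hgreatest : ∀ᶠ i in l, IsGreatest (S i) (xs i)) (hin : ∀ s ∈ Ioo x y, ∀ᶠ i in l, s ∈ S i)
    (hout : ∀ b > y, ∀ᶠ i in l, b ∉ S i) : Tendsto xs l (𝓝 y) :=
  tendsto_of_isLeast_of_ordConnected (α := αᵒᵈ) (y := OrderDual.toDual x) hxy
    (fun i => (hS i).dual) (hgreatest.mono fun _ h => h.dual) (fun s hs => hin s ⟨hs.2, hs.1⟩)
    hout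

end OrderLimits

theorem tendsto_sInf_sSup_of_ordConnected {α ι : Type*} [ConditionallyCompleteLinearOrder α]
    [TopologicalSpace α] [OrderTopology α] [DenselyOrdered α] {l : Filter ι} {S : ι → Set α}
    {x y : α} (hxy : x < y) (hcomp : ∀ i, IsCompact (S i)) (hconn : ∀ i, (S i).OrdConnected)
    (hin : ∀ s ∈ Ioo x y, ∀ᶠ i in l, s ∈ S i) (hout : ∀ a ∉ Icc x y, ∀ᶠ i in l, a ∉ S i) :
    (∀ᶠ i in l, IsLeast (S i) (sInf (S i)) ∧ IsGreatest (S i) (sSup (S i)) ∧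
      sInf (S i) < sSup (S i)) ∧
    Tendsto (fun i => sInf (S i)) l (𝓝 x) ∧ Tendsto (fun i => sSup (S i)) l (𝓝 y) := by
  obtain ⟨s, hxs, hsy⟩ := exists_between hxy
  obtain ⟨s', hss', hs'y⟩ := exists_between hsy
  have hbounds : ∀ᶠ i in l, IsLeast (S i) (sInf (S i)) ∧ IsGreatest (S i) (sSup (S i)) ∧
      sInf (S i) < sSup (S i) := by
    filter_upwards [hin s ⟨hxs, hsy⟩, hin s' ⟨hxs.trans hss', hs'y⟩] with i hs hs'
    have hl := (hcomp i).isLeast_sInf ⟨s, hs⟩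
    have hg := (hcomp i).isGreatest_sSup ⟨s, hs⟩
    exact ⟨hl, hg, ((hl.2 hs).trans_lt hss').trans_le (hg.2 hs')⟩
  exact ⟨hbounds,
    tendsto_of_isLeast_of_ordConnected hxy hconn (hbounds.mono fun _ h => h.1) hin
      fun a ha => hout a fun h => ha.not_ge h.1,
    tendsto_of_isGreatest_of_ordConnected hxy hconn (hbounds.mono fun _ h => h.2.1) hin
      fun b hb => hout b fun h => hb.not_ge h.2⟩

section Lines

variable {E : Type*} [AddCommGroup E] [Module ℝ E] {C : Set E} {p v : E}

theorem Convex.setOf_add_smul_mem (hC : Convex ℝ C) (p v : E) :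
    Convex ℝ {t : ℝ | p + t • v ∈ C} :=
  (hC.translate_preimage_right p).linear_preimage (LinearMap.toSpanSingleton ℝ E v)

theorem add_smul_mem_openSegment {a b s : ℝ} (hs : s ∈ openSegment ℝ a b) :
    p + s • v ∈ openSegment ℝ (p + a • v) (p + b • v) := by
  obtain ⟨μ, ν, hμ, hν, hμν, rfl⟩ := hs
  refine ⟨μ, ν, hμ, hν, hμν, ?_⟩
  linear_combination (norm := module) hμν • p

variable [TopologicalSpace E] [IsTopologicalAddGroup E] [ContinuousSMul ℝ E]

theorem IsCompact.setOf_add_smul_mem [T2Space E] (hC : IsCompact C) (p : E) (hv : v ≠ 0) :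
    IsCompact {t : ℝ | p + t • v ∈ C} :=
  (isClosedEmbedding_smul_left hv).isCompact_preimage
    ((Homeomorph.addLeft p).isCompact_preimage.2 hC)

theorem Convex.add_smul_mem_interior_of_mem_Ioo (hC : Convex ℝ C) {t₀ x y : ℝ}
    (ht₀ : p + t₀ • v ∈ interior C) (hx : p + x • v ∈ C) (hy : p + y • v ∈ C) {s : ℝ}
    (hs : s ∈ Ioo x y) : p + s • v ∈ interior C := by
  rcases lt_trichotomy s t₀ with hlt | rfl | hgt
  · refine hC.openSegment_interior_self_subset_interior ht₀ hx (add_smul_mem_openSegment ?_)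
    rw [openSegment_symm, openSegment_eq_Ioo (hs.1.trans hlt)]
    exact ⟨hs.1, hlt⟩
  · exact ht₀
  · refine hC.openSegment_interior_self_subset_interior ht₀ hy (add_smul_mem_openSegment ?_)
    rw [openSegment_eq_Ioo (hgt.trans hs.2)]
    exact ⟨hgt, hs.2⟩

theorem Convex.exists_chord_of_add_smul_mem_interior [T2Space E] (hC : Convex ℝ C)
    (hCc : IsCompact C) (hv : v ≠ 0) {t₀ : ℝ} (ht₀ : p + t₀ • v ∈ interior C) :
    ∃ x y, IsLeast {t : ℝ | p + t • v ∈ C} x ∧ IsGreatest {t : ℝ | p + t • v ∈ C} y ∧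
      t₀ ∈ Ioo x y ∧ ∀ s ∈ Ioo x y, p + s • v ∈ interior C := by
  have hS := hCc.setOf_add_smul_mem p hv
  obtain ⟨x, hx⟩ := hS.exists_isLeast ⟨t₀, interior_subset (s := C) ht₀⟩
  obtain ⟨y, hy⟩ := hS.exists_isGreatest ⟨t₀, interior_subset (s := C) ht₀⟩
  have hnhds : {t : ℝ | p + t • v ∈ C} ∈ 𝓝 t₀ :=
    mem_of_superset ((isOpen_interior.preimage (f := fun t : ℝ => p + t • v)
      (by fun_prop)).mem_nhds ht₀)
      fun t ht => interior_subset (s := C) ht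
  obtain ⟨r, hr, hball⟩ := Metric.mem_nhds_iff.1 hnhds
  have hlow : t₀ - r / 2 ∈ {t : ℝ | p + t • v ∈ C} :=
    hball (by rw [Real.ball_eq_Ioo]; constructor <;> linarith)
  have hhigh : t₀ + r / 2 ∈ {t : ℝ | p + t • v ∈ C} :=
    hball (by rw [Real.ball_eq_Ioo]; constructor <;> linarith)
  refine ⟨x, y, hx, hy, ⟨?_, ?_⟩,
    fun s hs => hC.add_smul_mem_interior_of_mem_Ioo ht₀ hx.1 hy.1 hs⟩
  · linarith [hx.2 hlow]
  · linarith [hy.2 hhigh]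

end Lines

section Hausdorff

variable {E ι : Type*} [NormedAddCommGroup E] {l : Filter ι} {K : Set E} {Kn : ι → Set E}
  {z : ι → E} {z₀ : E}

theorem Convex.ball_sub_subset_of_forall_infDist_le [InnerProductSpace ℝ E] [CompleteSpace E]
    {C : Set E} (hC : Convex ℝ C) (hCc : IsClosed C)
    (hne : C.Nonempty) {q : E} {ε δ : ℝ} (hδ : 0 ≤ δ) (hsub : ∀ w ∈ ball q ε, infDist w C ≤ δ) :
    ball q (ε - δ) ⊆ C := by
  intro z hz
  by_contra hzC
  obtain ⟨f, u, hfC, hfz⟩ := geometric_hahn_banach_closed_point hC hCc hzC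
  set a : E := (InnerProductSpace.toDual ℝ E).symm f
  have ha : ∀ x, ⟪a, x⟫ = f x := fun x => InnerProductSpace.toDual_symm_apply
  have hna : 0 < ‖a‖ := by
    refine norm_pos_iff.2 fun h0 => ?_
    obtain ⟨c, hc⟩ := hne
    have := (hfC c hc).trans hfz
    rw [← ha, ← ha, h0, inner_zero_left, inner_zero_left] at this
    exact lt_irrefl _ this
  -- Push `z` a distance `δ` away from `C`, along the normal `a` of the separating hyperplane.
  set w := z + (δ / ‖a‖) • a
  have hw : w ∈ ball q ε := by
    rw [mem_ball] at hz ⊢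
    calc dist w q ≤ dist w z + dist z q := dist_triangle _ _ _
      _ = δ + dist z q := by
        rw [dist_eq_norm, add_sub_cancel_left, norm_smul, Real.norm_of_nonneg (by positivity),
          div_mul_cancel₀ _ hna.ne']
      _ < ε := by linarith
  have hfar : δ + (f z - u) / ‖a‖ ≤ infDist w C := by
    refine (le_infDist hne).2 fun c hc => ?_
    have hinner : ⟪a, w - c⟫ = f z + δ * ‖a‖ - f c := by
      rw [inner_sub_right, inner_add_right, inner_smul_right, real_inner_self_eq_norm_mul_norm,
        ha, ha]
      field_simp
    have := real_inner_le_norm a (w - c)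
    rw [hinner, ← dist_eq_norm] at this
    rw [add_div' _ _ _ hna.ne', div_le_iff₀ hna]
    linarith [hfC c hc]
  have hgap : 0 < (f z - u) / ‖a‖ := div_pos (by linarith) hna
  linarith [hsub w hw]

theorem eventually_mem_interior_of_tendsto_hausdorffDist [InnerProductSpace ℝ E]
    [CompleteSpace E] (hconv : ∀ i, Convex ℝ (Kn i)) (hclosed : ∀ i, IsClosed (Kn i))
    (hfin : ∀ i, hausdorffEDist (Kn i) K ≠ ⊤)
    (hlim : Tendsto (fun i => hausdorffDist (Kn i) K) l (𝓝 0))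
    (hz : Tendsto z l (𝓝 z₀)) (hz₀ : z₀ ∈ interior K) : ∀ᶠ i in l, z i ∈ interior (Kn i) := by
  have hfin' : ∀ i, hausdorffEDist K (Kn i) ≠ ⊤ := fun i => by
    rw [hausdorffEDist_comm]; exact hfin i
  obtain ⟨r, hr, hball⟩ := Metric.isOpen_iff.1 isOpen_interior z₀ hz₀
  filter_upwards [hlim.eventually (gt_mem_nhds (half_pos hr)),
    hz.eventually (ball_mem_nhds z₀ (half_pos hr))] with i hi hzi
  have hsub : ball z₀ (r - r / 2) ⊆ Kn i := by
    refine (hconv i).ball_sub_subset_of_forall_infDist_le (hclosed i)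
      (nonempty_of_hausdorffEDist_ne_top ⟨z₀, interior_subset hz₀⟩ (hfin' i)) (by positivity)
      fun w hw => ?_
    calc infDist w (Kn i) ≤ hausdorffDist K (Kn i) :=
          infDist_le_hausdorffDist_of_mem (interior_subset (hball hw)) (hfin' i)
      _ ≤ r / 2 := hausdorffDist_comm (s := K) ▸ hi.le
  rw [sub_half] at hsub
  exact interior_maximal hsub isOpen_ball hzi

theorem eventually_notMem_of_tendsto_hausdorffDist (hK : IsClosed K)
    (hfin : ∀ i, hausdorffEDist (Kn i) K ≠ ⊤)
    (hlim : Tendsto (fun i => hausdorffDist (Kn i) K) l (𝓝 0))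
    (hz : Tendsto z l (𝓝 z₀)) (hz₀ : z₀ ∉ K) : ∀ᶠ i in l, z i ∉ Kn i := by
  rcases K.eq_empty_or_nonempty with rfl | hKne
  · exact Eventually.of_forall fun i hi =>
      (nonempty_of_hausdorffEDist_ne_top ⟨_, hi⟩ (hfin i)).ne_empty rfl
  have hpos := (hK.notMem_iff_infDist_pos hKne).1 hz₀
  have hdist : Tendsto (fun i => infDist (z i) K) l (𝓝 (infDist z₀ K)) :=
    ((continuous_infDist_pt K).tendsto z₀).comp hz
  filter_upwards [hlim.eventually (gt_mem_nhds (half_pos hpos)),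
    hdist.eventually (lt_mem_nhds (half_lt_self hpos))] with i hi hzi hmem
  linarith [infDist_le_hausdorffDist_of_mem hmem (hfin i)]

end Hausdorff

theorem stmt9_general (d : ℕ) (K : Set (EuclideanSpace ℝ (Fin d)))
    (Kn : ℕ → Set (EuclideanSpace ℝ (Fin d)))
    (hKconv : Convex ℝ K) (hKcomp : IsCompact K)
    (hKn : ∀ n, Convex ℝ (Kn n) ∧ IsCompact (Kn n) ∧ (interior (Kn n)).Nonempty)
    (hconv : Tendsto (fun n => Metric.hausdorffDist (Kn n) K) atTop (nhds 0))
    (p : EuclideanSpace ℝ (Fin d)) (v : EuclideanSpace ℝ (Fin d)) (hv : ‖v‖ = 1)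
    (pn : ℕ → EuclideanSpace ℝ (Fin d)) (vn : ℕ → EuclideanSpace ℝ (Fin d))
    (hvn : ∀ n, ‖vn n‖ = 1)
    (hpn : Tendsto pn atTop (nhds p)) (hvnlim : Tendsto vn atTop (nhds v))
    (hmeet : ∃ t : ℝ, p + t • v ∈ interior K) :
    ∃ (N : ℕ) (x y : ℝ) (xn yn : ℕ → ℝ),
      IsLeast {t : ℝ | p + t • v ∈ K} x ∧ IsGreatest {t : ℝ | p + t • v ∈ K} y ∧ x < y ∧
      (∀ n ≥ N,
        (∃ t : ℝ, pn n + t • vn n ∈ interior (Kn n)) ∧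
        IsLeast {t : ℝ | pn n + t • vn n ∈ Kn n} (xn n) ∧
        IsGreatest {t : ℝ | pn n + t • vn n ∈ Kn n} (yn n) ∧ xn n < yn n) ∧
      Tendsto (fun n => pn n + (((xn n + yn n) / 2) • vn n)) atTop
        (nhds (p + ((x + y) / 2) • v)) ∧
      Tendsto (fun n => yn n - xn n) atTop (nhds (y - x)) := by
  obtain ⟨t₀, ht₀⟩ := hmeet
  have hne_zero {w : EuclideanSpace ℝ (Fin d)} (hw : ‖w‖ = 1) : w ≠ 0 :=
    norm_ne_zero_iff.1 (hw ▸ one_ne_zero)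
  obtain ⟨x, y, hx, hy, ⟨hxt₀, ht₀y⟩, hIoo⟩ :=
    hKconv.exists_chord_of_add_smul_mem_interior hKcomp (hne_zero hv) ht₀
  have hfin (n : ℕ) : hausdorffEDist (Kn n) K ≠ ⊤ :=
    hausdorffEDist_ne_top_of_nonempty_of_bounded ((hKn n).2.2.mono interior_subset)
      ⟨_, interior_subset (s := K) ht₀⟩ (hKn n).2.1.isBounded hKcomp.isBounded
  have hline (s : ℝ) : Tendsto (fun n => pn n + s • vn n) atTop (𝓝 (p + s • v)) :=
    hpn.add (hvnlim.const_smul s)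
  have hin (s : ℝ) (hs : s ∈ Ioo x y) : ∀ᶠ n in atTop, pn n + s • vn n ∈ interior (Kn n) :=
    eventually_mem_interior_of_tendsto_hausdorffDist (fun n => (hKn n).1)
      (fun n => (hKn n).2.1.isClosed) hfin hconv (hline s) (hIoo s hs)
  have hout (s : ℝ) (hs : s ∉ Icc x y) : ∀ᶠ n in atTop, pn n + s • vn n ∉ Kn n :=
    eventually_notMem_of_tendsto_hausdorffDist hKcomp.isClosed hfin hconv (hline s)
      fun h => hs ⟨hx.2 h, hy.2 h⟩
  obtain ⟨hbounds, hxn, hyn⟩ := tendsto_sInf_sSup_of_ordConnected (hxt₀.trans ht₀y)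
    (fun n => (hKn n).2.1.setOf_add_smul_mem (pn n) (hne_zero (hvn n)))
    (fun n => ((hKn n).1.setOf_add_smul_mem (pn n) (vn n)).ordConnected)
    (fun s hs => (hin s hs).mono fun n h => interior_subset (s := Kn n) h) hout
  obtain ⟨N, hN⟩ := eventually_atTop.1 ((hin t₀ ⟨hxt₀, ht₀y⟩).and hbounds)
  exact ⟨N, x, y, _, _, hx, hy, hxt₀.trans ht₀y, fun n hn => ⟨⟨t₀, (hN n hn).1⟩, (hN n hn).2⟩,
    hpn.add (((hxn.add hyn).div_const 2).smul hvnlim), hyn.sub hxn⟩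

/-- Let convex bodies `K_n → K` in the Hausdorff metric and lines `l_n = p_n + ℝ v_n` converge
to a line `l = p + ℝ v` (unit direction vectors) meeting `int K`.  Then for large `n` the line
`l_n` meets `int (K_n)` in an open segment; moreover, parametrizing the chords by least and
greatest parameters, the midpoints of the segments converge to the midpoint of `l ∩ K`, and
their lengths converge to its length. -/
theorem stmt9 (d : ℕ) (K : Set (EuclideanSpace ℝ (Fin d)))
    (Kn : ℕ → Set (EuclideanSpace ℝ (Fin d)))
    (hKconv : Convex ℝ K) (hKcomp : IsCompact K) (hKint : (interior K).Nonempty)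
    (hKn : ∀ n, Convex ℝ (Kn n) ∧ IsCompact (Kn n) ∧ (interior (Kn n)).Nonempty)
    (hconv : Tendsto (fun n => Metric.hausdorffDist (Kn n) K) atTop (nhds 0))
    (p : EuclideanSpace ℝ (Fin d)) (v : EuclideanSpace ℝ (Fin d)) (hv : ‖v‖ = 1)
    (pn : ℕ → EuclideanSpace ℝ (Fin d)) (vn : ℕ → EuclideanSpace ℝ (Fin d))
    (hvn : ∀ n, ‖vn n‖ = 1)
    (hpn : Tendsto pn atTop (nhds p)) (hvnlim : Tendsto vn atTop (nhds v))
    (hmeet : ∃ t : ℝ, p + t • v ∈ interior K) :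
    ∃ (N : ℕ) (x y : ℝ) (xn yn : ℕ → ℝ),
      IsLeast {t : ℝ | p + t • v ∈ K} x ∧ IsGreatest {t : ℝ | p + t • v ∈ K} y ∧ x < y ∧
      (∀ n ≥ N,
        (∃ t : ℝ, pn n + t • vn n ∈ interior (Kn n)) ∧
        IsLeast {t : ℝ | pn n + t • vn n ∈ Kn n} (xn n) ∧
        IsGreatest {t : ℝ | pn n + t • vn n ∈ Kn n} (yn n) ∧ xn n < yn n) ∧
      Tendsto (fun n => pn n + (((xn n + yn n) / 2) • vn n)) atTop
        (nhds (p + ((x + y) / 2) • v)) ∧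
      Tendsto (fun n => yn n - xn n) atTop (nhds (y - x)) :=
  stmt9_general d K Kn hKconv hKcomp hKn hconv p v hv pn vn hvn hpn hvnlim hmeet
end
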